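/- arXiv:1307.8242 — 2 statements merged into one kernel-verified Lean document; each statement's English description precedes it below -/
import Mathlib

section
/- (Upper bound on the ℓ¹-ℓ² value function) Define J(x,u) = ‖Gu − Hx‖₂² + μ‖u‖₁ + xᵀQx and V(x) = min over u ∈ ℝᴺ of J(x,u), where μ > 0, Q ≻ 0, G has full column rank. Then for all x ∈ ℝⁿ, λ_min(Q)‖x‖₂² ≤ V(x) ≤ a₁‖x‖₂ + (a₂ + λ_max(Q))‖x‖₂², where a₁ = μ√N · σ_max(G†H), a₂ = λ_max(W*), G† = (GᵀG)⁻¹Gᵀ, W* = Hᵀ(I−GG†)H, and σ_max denotes the largest singular value. -/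
/-!
For the lower bound, every term of `J` except `xᵀQx` is nonnegative, and `xᵀQx ≥ λ_min(Q)‖x‖²`.
For the upper bound, evaluate `J` at the least-squares solution `u₀ = G†Hx`: its residual is
`(GG† - I)Hx`, and `GG†` is a symmetric idempotent, so the squared residual is `xᵀW*x`. The
`ℓ¹`-norm of `u₀` is at most `√N ‖u₀‖₂ ≤ √N σ_max(G†H) ‖x‖₂`, and each quadratic form is bounded by
the extreme eigenvalue of its matrix after diagonalising it by an orthogonal change of coordinates.
-/

open Matrix

theorem Matrix.isHermitian_transpose_mul_self {m n α : Type*} [Fintype m] [CommSemiring α]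
    [StarRing α] [TrivialStar α] (A : Matrix m n α) : (Aᵀ * A).IsHermitian := by
  rw [IsHermitian, conjTranspose_eq_transpose_of_trivial, transpose_mul, transpose_transpose]

namespace Matrix

section DotProduct

variable {K m n : Type*} [CommSemiring K] [Fintype m] [Fintype n]

theorem dotProduct_self_eq_sum_sq (v : n → K) : v ⬝ᵥ v = ∑ i, v i ^ 2 := by
  simp only [dotProduct, sq]

theorem dotProduct_mulVec_mulVec_self (H : Matrix m n K) (A : Matrix m m K) (x : n → K) :
    H *ᵥ x ⬝ᵥ A *ᵥ (H *ᵥ x) = x ⬝ᵥ (Hᵀ * A * H) *ᵥ x := by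
  rw [← mulVec_mulVec, ← mulVec_mulVec, dotProduct_transpose_mulVec, dotProduct_comm]

theorem mulVec_dotProduct_mulVec_self (M : Matrix m n K) (x : n → K) :
    M *ᵥ x ⬝ᵥ M *ᵥ x = x ⬝ᵥ (Mᵀ * M) *ᵥ x := by
  rw [← mulVec_mulVec, dotProduct_transpose_mulVec]

end DotProduct

namespace IsHermitian

variable {n : Type*} [Fintype n] [DecidableEq n] {A : Matrix n n ℝ}

theorem exists_sum_sq_eq_and_dotProduct_mulVec_eq (hA : A.IsHermitian) (x : n → ℝ) :
    ∃ y : n → ℝ, ∑ i, y i ^ 2 = ∑ i, x i ^ 2 ∧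
      x ⬝ᵥ A *ᵥ x = ∑ i, hA.eigenvalues i * y i ^ 2 := by
  set U : Matrix n n ℝ := (hA.eigenvectorUnitary : Matrix n n ℝ)
  have hU : star U = Uᵀ := by rw [star_eq_conjTranspose, conjTranspose_eq_transpose_of_trivial]
  have hUUt : U * Uᵀ = 1 := hU ▸ Unitary.coe_mul_star_self hA.eigenvectorUnitary
  have hspec : A = U * diagonal hA.eigenvalues * Uᵀ := by
    rw [← hU]
    simpa [Unitary.conjStarAlgAut_apply] using hA.spectral_theorem
  refine ⟨Uᵀ *ᵥ x, ?_, ?_⟩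
  · rw [← dotProduct_self_eq_sum_sq, ← dotProduct_self_eq_sum_sq, mulVec_dotProduct_mulVec_self,
      transpose_transpose, hUUt, one_mulVec]
  · have h := dotProduct_mulVec_mulVec_self Uᵀ (diagonal hA.eigenvalues) x
    rw [transpose_transpose, ← hspec] at h
    rw [← h]
    simp only [dotProduct, mulVec_diagonal]
    exact Finset.sum_congr rfl fun i _ => by ring

theorem dotProduct_mulVec_le_iSup_eigenvalues_mul (hA : A.IsHermitian) (x : n → ℝ) :
    x ⬝ᵥ A *ᵥ x ≤ (⨆ i, hA.eigenvalues i) * ∑ i, x i ^ 2 := by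
  obtain ⟨y, hy, hAy⟩ := hA.exists_sum_sq_eq_and_dotProduct_mulVec_eq x
  rw [hAy, ← hy, Finset.mul_sum]
  gcongr with i
  exact le_ciSup (Set.finite_range _).bddAbove i

theorem iInf_eigenvalues_mul_le_dotProduct_mulVec (hA : A.IsHermitian) (x : n → ℝ) :
    (⨅ i, hA.eigenvalues i) * ∑ i, x i ^ 2 ≤ x ⬝ᵥ A *ᵥ x := by
  obtain ⟨y, hy, hAy⟩ := hA.exists_sum_sq_eq_and_dotProduct_mulVec_eq x
  rw [hAy, ← hy, Finset.mul_sum]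
  gcongr with i
  exact ciInf_le (Set.finite_range _).bddBelow i

end IsHermitian

section LeastSquares

variable {K m N : Type*} [CommRing K] [Fintype m] [Fintype N] [DecidableEq N]
  {G : Matrix m N K}

theorem transpose_mul_inv_gram_mul_transpose (G : Matrix m N K) :
    (G * ((Gᵀ * G)⁻¹ * Gᵀ))ᵀ = G * ((Gᵀ * G)⁻¹ * Gᵀ) := by
  rw [transpose_mul, transpose_mul, transpose_transpose, transpose_nonsing_inv, transpose_mul,
    transpose_transpose, Matrix.mul_assoc]

theorem isIdempotentElem_mul_inv_gram_mul_transpose (hG : IsUnit (Gᵀ * G)) :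
    IsIdempotentElem (G * ((Gᵀ * G)⁻¹ * Gᵀ)) := by
  have hdet : IsUnit (Gᵀ * G).det := (isUnit_iff_isUnit_det _).mp hG
  simp only [IsIdempotentElem, Matrix.mul_assoc]
  rw [← Matrix.mul_assoc Gᵀ G, ← Matrix.mul_assoc (Gᵀ * G)⁻¹, nonsing_inv_mul _ hdet,
    Matrix.one_mul]

theorem leastSquares_residual_dotProduct_self [DecidableEq m] (hG : IsUnit (Gᵀ * G))
    (y : m → K) :
    (G *ᵥ (((Gᵀ * G)⁻¹ * Gᵀ) *ᵥ y) - y) ⬝ᵥ (G *ᵥ (((Gᵀ * G)⁻¹ * Gᵀ) *ᵥ y) - y) =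
      y ⬝ᵥ (1 - G * ((Gᵀ * G)⁻¹ * Gᵀ)) *ᵥ y := by
  set P := G * ((Gᵀ * G)⁻¹ * Gᵀ) with hP
  have hresidual : G *ᵥ (((Gᵀ * G)⁻¹ * Gᵀ) *ᵥ y) - y = (P - 1) *ᵥ y := by
    rw [mulVec_mulVec, sub_mulVec, one_mulVec]
  have hsq : (P - 1)ᵀ * (P - 1) = 1 - P := by
    rw [transpose_sub, transpose_one, hP, transpose_mul_inv_gram_mul_transpose, ← hP,
      ← neg_sub, neg_mul_neg]
    exact (isIdempotentElem_mul_inv_gram_mul_transpose hG).one_sub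
  rw [hresidual, mulVec_dotProduct_mulVec_self, hsq]

end LeastSquares

section Norms

variable {ι m n : Type*} [Fintype ι] [Fintype m] [Fintype n] [DecidableEq n]

theorem sum_abs_le_sqrt_card_mul_sqrt_sum_sq (f : ι → ℝ) :
    ∑ i, |f i| ≤ √(Fintype.card ι) * √(∑ i, f i ^ 2) := by
  rw [← Real.sqrt_mul (Nat.cast_nonneg _), Real.le_sqrt (by positivity) (by positivity)]
  simpa only [sq_abs, Finset.card_univ] using
    sq_sum_le_card_mul_sum_sq (s := Finset.univ) (f := fun i => |f i|)

theorem sqrt_sum_sq_mulVec_le (M : Matrix m n ℝ) (x : n → ℝ) :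
    √(∑ i, (M *ᵥ x) i ^ 2) ≤
      √(⨆ i, (isHermitian_transpose_mul_self M).eigenvalues i) * √(∑ i, x i ^ 2) := by
  rw [← Real.sqrt_mul' _ (by positivity)]
  apply Real.sqrt_le_sqrt
  rw [← dotProduct_self_eq_sum_sq, mulVec_dotProduct_mulVec_self]
  exact (isHermitian_transpose_mul_self M).dotProduct_mulVec_le_iSup_eigenvalues_mul x

theorem sum_abs_mulVec_le (M : Matrix m n ℝ) (x : n → ℝ) :
    ∑ i, |(M *ᵥ x) i| ≤ √(Fintype.card m) *
      √(⨆ i, (isHermitian_transpose_mul_self M).eigenvalues i) * √(∑ i, x i ^ 2) := by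
  rw [mul_assoc]
  exact (sum_abs_le_sqrt_card_mul_sqrt_sum_sq _).trans
    (mul_le_mul_of_nonneg_left (sqrt_sum_sq_mulVec_le M x) (Real.sqrt_nonneg _))

end Norms

end Matrix

theorem l1l2_value_function_bounds_general (m N n : ℕ)
    (G : Matrix (Fin m) (Fin N) ℝ) (H : Matrix (Fin m) (Fin n) ℝ)
    (Q : Matrix (Fin n) (Fin n) ℝ) (hQ : Q.PosDef)
    (μ : ℝ) (hμ : 0 < μ) (hG : IsUnit (Gᵀ * G))
    (hWs : (Hᵀ * (1 - G * ((Gᵀ * G)⁻¹ * Gᵀ)) * H).IsHermitian)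
    (J : (Fin n → ℝ) → (Fin N → ℝ) → ℝ)
    (hJ : ∀ x u, J x u =
      (G *ᵥ u - H *ᵥ x) ⬝ᵥ (G *ᵥ u - H *ᵥ x) + μ * ∑ i, |u i| + x ⬝ᵥ (Q *ᵥ x))
    (V : (Fin n → ℝ) → ℝ)
    (hVle : ∀ x u, V x ≤ J x u)
    (hVmin : ∀ x, ∃ u, V x = J x u)
    (x : Fin n → ℝ) :
    (⨅ i, hQ.1.eigenvalues i) * (∑ i, (x i) ^ 2) ≤ V x ∧
    V x ≤
      (μ * Real.sqrt N *
        Real.sqrt (⨆ i,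
          (Matrix.isHermitian_transpose_mul_self (((Gᵀ * G)⁻¹ * Gᵀ) * H)).eigenvalues i)) *
          Real.sqrt (∑ i, (x i) ^ 2) +
      ((⨆ i, hWs.eigenvalues i) + (⨆ i, hQ.1.eigenvalues i)) * (∑ i, (x i) ^ 2) := by
  constructor
  · obtain ⟨u, hu⟩ := hVmin x
    have hQx := hQ.1.iInf_eigenvalues_mul_le_dotProduct_mulVec x
    have hresidual : 0 ≤ (G *ᵥ u - H *ᵥ x) ⬝ᵥ (G *ᵥ u - H *ᵥ x) := by
      rw [dotProduct_self_eq_sum_sq]; positivity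
    have hl1 : 0 ≤ μ * ∑ i, |u i| := by positivity
    rw [hu, hJ]
    linarith
  · set u₀ := (((Gᵀ * G)⁻¹ * Gᵀ) * H) *ᵥ x with hu₀
    have hresidual : (G *ᵥ u₀ - H *ᵥ x) ⬝ᵥ (G *ᵥ u₀ - H *ᵥ x) ≤
        (⨆ i, hWs.eigenvalues i) * ∑ i, x i ^ 2 := by
      rw [hu₀, ← mulVec_mulVec, leastSquares_residual_dotProduct_self hG,
        dotProduct_mulVec_mulVec_self]
      exact hWs.dotProduct_mulVec_le_iSup_eigenvalues_mul x
    have hl1 := mul_le_mul_of_nonneg_left (sum_abs_mulVec_le (((Gᵀ * G)⁻¹ * Gᵀ) * H) x) hμ.le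
    have hQx := hQ.1.dotProduct_mulVec_le_iSup_eigenvalues_mul x
    rw [Fintype.card_fin] at hl1
    calc V x ≤ J x u₀ := hVle x u₀
      _ ≤ _ := by rw [hJ]; linarith

theorem l1l2_value_function_bounds (m N n : ℕ) [NeZero N] [NeZero n]
    (G : Matrix (Fin m) (Fin N) ℝ) (H : Matrix (Fin m) (Fin n) ℝ)
    (Q : Matrix (Fin n) (Fin n) ℝ) (hQ : Q.PosDef)
    (μ : ℝ) (hμ : 0 < μ) (hG : IsUnit (Gᵀ * G))
    (hWs : (Hᵀ * (1 - G * ((Gᵀ * G)⁻¹ * Gᵀ)) * H).IsHermitian)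
    (J : (Fin n → ℝ) → (Fin N → ℝ) → ℝ)
    (hJ : ∀ x u, J x u =
      (G *ᵥ u - H *ᵥ x) ⬝ᵥ (G *ᵥ u - H *ᵥ x) + μ * ∑ i, |u i| + x ⬝ᵥ (Q *ᵥ x))
    (V : (Fin n → ℝ) → ℝ)
    (hVle : ∀ x u, V x ≤ J x u)
    (hVmin : ∀ x, ∃ u, V x = J x u)
    (x : Fin n → ℝ) :
    (⨅ i, hQ.1.eigenvalues i) * (∑ i, (x i) ^ 2) ≤ V x ∧
    V x ≤
      (μ * Real.sqrt N *
        Real.sqrt (⨆ i,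
          (Matrix.isHermitian_transpose_mul_self (((Gᵀ * G)⁻¹ * Gᵀ) * H)).eigenvalues i)) *
          Real.sqrt (∑ i, (x i) ^ 2) +
      ((⨆ i, hWs.eigenvalues i) + (⨆ i, hQ.1.eigenvalues i)) * (∑ i, (x i) ^ 2) :=
  l1l2_value_function_bounds_general m N n G H Q hQ μ hμ hG hWs J hJ V hVle hVmin x
end

section
/- (Closed-loop contraction under bounded additive perturbation) Let A ∈ ℝ^{n×n}, B ∈ ℝⁿ, Q ≻ 0, and P ≻ 0 satisfying P = AᵀPA − AᵀPB(BᵀPB)⁻¹BᵀPA + Q, with K = −(BᵀPB)⁻¹BᵀPA and ρ = 1 − λ_min(QP⁻¹) ∈ [0,1). If a trajectory satisfies x_{i+1} = (A+BK)x_i + B·w_i with (BᵀPB)|w_i|² ≤ δ for all i, then ‖x_i‖_P² ≤ ρⁱ‖x₀‖_P² + δ·(1−ρⁱ)/(1−ρ) for all i ≥ 0. -/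
open Matrix

section OldSqrt
open scoped ComplexOrder

/-- The matrix square root of a positive semidefinite matrix, as defined in the older
Mathlib (`Matrix.PosSemidef.sqrt`, removed since). -/
noncomputable def Matrix.PosSemidef.sqrt {n 𝕜 : Type*} [Fintype n] [DecidableEq n] [RCLike 𝕜]
    {A : Matrix n n 𝕜} (hA : A.PosSemidef) : Matrix n n 𝕜 :=
  hA.1.eigenvectorUnitary.1 * diagonal ((↑) ∘ Real.sqrt ∘ hA.1.eigenvalues) *
  (star hA.1.eigenvectorUnitary : Matrix n n 𝕜)

theorem Matrix.PosSemidef.posSemidef_sqrt {n 𝕜 : Type*} [Fintype n] [DecidableEq n] [RCLike 𝕜]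
    {A : Matrix n n 𝕜} (hA : A.PosSemidef) : PosSemidef hA.sqrt := by
  apply PosSemidef.mul_mul_conjTranspose_same
  refine posSemidef_diagonal_iff.mpr fun i ↦ ?_
  rw [Function.comp_apply, RCLike.nonneg_iff]
  constructor
  · simp only [RCLike.ofReal_re]
    exact Real.sqrt_nonneg _
  · simp only [RCLike.ofReal_im]

end OldSqrt

/-- The matrix `P^{-1/2} Q P^{-1/2}` is Hermitian; its eigenvalues coincide with
those of `Q P⁻¹`. -/
noncomputable def sqrtInvConjHermitian {n : ℕ} (P Q : Matrix (Fin n) (Fin n) ℝ)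
    (hP : P.PosDef) (hQ : Q.PosDef) :
    ((hP.posSemidef.sqrt)⁻¹ * Q * (hP.posSemidef.sqrt)⁻¹).IsHermitian := by
  have hS : ((hP.posSemidef.sqrt)⁻¹).IsHermitian :=
    hP.posSemidef.posSemidef_sqrt.isHermitian.inv
  have := Matrix.isHermitian_mul_mul_conjTranspose ((hP.posSemidef.sqrt)⁻¹) hQ.1
  rwa [hS.eq] at this


/-! With `V x = xᵀ P x`, the Riccati equation and the choice of `K` complete a square: one
closed-loop step gives `V x⁺ = V x - xᵀ Q x + (Bᵀ P B) w²`. For `S = P^{1/2}` we have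
`xᵀ Q x = (S x)ᵀ (S⁻¹ Q S⁻¹) (S x) ≥ λ_min ‖S x‖² = λ_min V x`, hence `V x⁺ ≤ ρ V x + δ`, and
iterating this scalar recursion gives the bound. The same identity with `w = 0` shows `Q ≤ P`,
so `λ_min ∈ (0, 1]`, i.e. `ρ ∈ [0, 1)`. -/

section Quadratic

variable {ι : Type*} [Fintype ι]

lemma Matrix.IsSymm.dotProduct_mulVec_comm {R : Type*} [CommRing R] {P : Matrix ι ι R}
    (hP : P.IsSymm) (u v : ι → R) : u ⬝ᵥ (P *ᵥ v) = v ⬝ᵥ (P *ᵥ u) := by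
  rw [dotProduct_mulVec, ← mulVec_transpose, hP.eq, dotProduct_comm]

lemma Matrix.IsSymm.dotProduct_mulVec_add_smul {R : Type*} [CommRing R] {P : Matrix ι ι R}
    (hP : P.IsSymm) (u b : ι → R) (c : R) :
    (u + c • b) ⬝ᵥ (P *ᵥ (u + c • b)) =
      u ⬝ᵥ (P *ᵥ u) + 2 * c * (b ⬝ᵥ (P *ᵥ u)) + c ^ 2 * (b ⬝ᵥ (P *ᵥ b)) := by
  simp only [mulVec_add, mulVec_smul, dotProduct_add, add_dotProduct, dotProduct_smul,
    smul_dotProduct, smul_eq_mul, hP.dotProduct_mulVec_comm u b]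
  ring

section Riccati

variable {R : Type*} [Field R] {A P Q : Matrix ι ι R} {B K : ι → R}

lemma dotProduct_mulVec_of_riccati (hP : P.IsSymm)
    (hric : P = Aᵀ * P * A
      - (B ⬝ᵥ (P *ᵥ B))⁻¹ • vecMulVec (Aᵀ *ᵥ (P *ᵥ B)) ((B ᵥ* P) ᵥ* A) + Q) (y : ι → R) :
    y ⬝ᵥ (P *ᵥ y) = (A *ᵥ y) ⬝ᵥ (P *ᵥ (A *ᵥ y))
      - (B ⬝ᵥ (P *ᵥ B))⁻¹ * (B ⬝ᵥ (P *ᵥ (A *ᵥ y))) ^ 2 + y ⬝ᵥ (Q *ᵥ y) := by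
  have hAy : (B ᵥ* P) ᵥ* A ⬝ᵥ y = B ⬝ᵥ (P *ᵥ (A *ᵥ y)) := by
    rw [vecMul_vecMul, ← dotProduct_mulVec, mulVec_mulVec]
  have hyA : y ⬝ᵥ (Aᵀ *ᵥ (P *ᵥ B)) = B ⬝ᵥ (P *ᵥ (A *ᵥ y)) := by
    rw [dotProduct_mulVec, vecMul_transpose, hP.dotProduct_mulVec_comm]
  conv_lhs => rw [hric]
  simp only [add_mulVec, sub_mulVec, smul_mulVec, vecMulVec_mulVec, op_smul_eq_smul, hAy,
    dotProduct_add, dotProduct_sub, dotProduct_smul, hyA, smul_eq_mul, ← mulVec_mulVec]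
  rw [dotProduct_mulVec y Aᵀ, vecMul_transpose]
  ring

lemma closedLoop_dotProduct_mulVec_eq (hP : P.IsSymm) (hs : B ⬝ᵥ (P *ᵥ B) ≠ 0)
    (hric : P = Aᵀ * P * A
      - (B ⬝ᵥ (P *ᵥ B))⁻¹ • vecMulVec (Aᵀ *ᵥ (P *ᵥ B)) ((B ᵥ* P) ᵥ* A) + Q)
    (hK : K = -((B ⬝ᵥ (P *ᵥ B))⁻¹ • ((B ᵥ* P) ᵥ* A))) (y : ι → R) (c : R) :
    ((A + vecMulVec B K) *ᵥ y + c • B) ⬝ᵥ (P *ᵥ ((A + vecMulVec B K) *ᵥ y + c • B)) =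
      y ⬝ᵥ (P *ᵥ y) - y ⬝ᵥ (Q *ᵥ y) + (B ⬝ᵥ (P *ᵥ B)) * c ^ 2 := by
  have hKy : K ⬝ᵥ y = -((B ⬝ᵥ (P *ᵥ B))⁻¹ * (B ⬝ᵥ (P *ᵥ (A *ᵥ y)))) := by
    rw [hK, neg_dotProduct, smul_dotProduct, vecMul_vecMul, ← dotProduct_mulVec, mulVec_mulVec,
      smul_eq_mul]
  have hz : (A + vecMulVec B K) *ᵥ y + c • B = A *ᵥ y + (K ⬝ᵥ y + c) • B := by
    rw [add_mulVec, vecMulVec_mulVec, op_smul_eq_smul, add_smul, add_assoc]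
  rw [hz, hP.dotProduct_mulVec_add_smul, dotProduct_mulVec_of_riccati hP hric y, hKy]
  field_simp
  ring

end Riccati

lemma dotProduct_mulVec_le_of_riccati {A P Q : Matrix ι ι ℝ} {B : ι → ℝ} (hP : P.PosDef)
    (hB : B ≠ 0)
    (hric : P = Aᵀ * P * A
      - (B ⬝ᵥ (P *ᵥ B))⁻¹ • vecMulVec (Aᵀ *ᵥ (P *ᵥ B)) ((B ᵥ* P) ᵥ* A) + Q) (y : ι → ℝ) :
    y ⬝ᵥ (Q *ᵥ y) ≤ y ⬝ᵥ (P *ᵥ y) := by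
  have hs : B ⬝ᵥ (P *ᵥ B) ≠ 0 := by simpa using (hP.dotProduct_mulVec_pos hB).ne'
  have h := hP.posSemidef.dotProduct_mulVec_nonneg
    ((A + vecMulVec B (-((B ⬝ᵥ (P *ᵥ B))⁻¹ • ((B ᵥ* P) ᵥ* A)))) *ᵥ y + (0 : ℝ) • B)
  rw [star_trivial, closedLoop_dotProduct_mulVec_eq (isHermitian_iff_isSymm.mp hP.1) hs hric rfl]
    at h
  linarith

lemma Matrix.IsHermitian.iInf_eigenvalues_mul_dotProduct_self_le [DecidableEq ι]
    {M : Matrix ι ι ℝ} (hM : M.IsHermitian) (z : ι → ℝ) :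
    (⨅ i, hM.eigenvalues i) * (z ⬝ᵥ z) ≤ z ⬝ᵥ (M *ᵥ z) := by
  set U : Matrix ι ι ℝ := (hM.eigenvectorUnitary : Matrix ι ι ℝ)
  have hUU : U * Uᵀ = 1 := by
    simpa [U, star_eq_conjTranspose] using Unitary.mul_star_self_of_mem hM.eigenvectorUnitary.2
  have hM_eq : M = U * diagonal hM.eigenvalues * Uᵀ := by
    conv_lhs => rw [hM.spectral_theorem]
    simp [U, Unitary.conjStarAlgAut_apply, star_eq_conjTranspose]
  set u := Uᵀ *ᵥ z
  have hnorm : z ⬝ᵥ z = u ⬝ᵥ u := by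
    rw [dotProduct_mulVec, vecMul_transpose, mulVec_mulVec, hUU, one_mulVec, dotProduct_comm]
  have hquad : z ⬝ᵥ (M *ᵥ z) = ∑ i, hM.eigenvalues i * (u i * u i) := by
    conv_lhs => rw [hM_eq]
    rw [← mulVec_mulVec, ← mulVec_mulVec, dotProduct_mulVec, ← mulVec_transpose]
    simp only [dotProduct, mulVec_diagonal]
    exact Finset.sum_congr rfl fun i _ ↦ by ring
  rw [hnorm, hquad, dotProduct, Finset.mul_sum]
  gcongr with i
  · exact mul_self_nonneg _
  · exact ciInf_le (Set.finite_range _).bddBelow i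

end Quadratic

section Sqrt

open scoped ComplexOrder

variable {n 𝕜 : Type*} [Fintype n] [DecidableEq n] [RCLike 𝕜] {A : Matrix n n 𝕜}

lemma Matrix.PosSemidef.sqrt_mul_sqrt (hA : A.PosSemidef) : hA.sqrt * hA.sqrt = A := by
  set U : Matrix n n 𝕜 := (hA.1.eigenvectorUnitary : Matrix n n 𝕜)
  have hUU : star U * U = 1 := Unitary.star_mul_self_of_mem hA.1.eigenvectorUnitary.2
  set D : Matrix n n 𝕜 := diagonal ((↑) ∘ Real.sqrt ∘ hA.1.eigenvalues)
  have hDD : D * D = diagonal ((↑) ∘ hA.1.eigenvalues) := by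
    rw [diagonal_mul_diagonal]
    congr 1
    funext i
    simp [← RCLike.ofReal_mul, Real.mul_self_sqrt (hA.eigenvalues_nonneg i)]
  conv_rhs => rw [hA.1.spectral_theorem, Unitary.conjStarAlgAut_apply]
  simp only [sqrt, Matrix.mul_assoc]
  rw [← Matrix.mul_assoc (star U) U, hUU, Matrix.one_mul, ← Matrix.mul_assoc _ _ (star U), hDD]

lemma Matrix.PosDef.isUnit_det_sqrt (hA : A.PosDef) : IsUnit hA.posSemidef.sqrt.det := by
  refine isUnit_iff_ne_zero.mpr fun h ↦ hA.det_pos.ne' ?_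
  rw [← hA.posSemidef.sqrt_mul_sqrt, det_mul, h, zero_mul]

end Sqrt

section SqrtInvConj

variable {n : ℕ} {P Q : Matrix (Fin n) (Fin n) ℝ}

lemma iInf_eigenvalues_sqrtInvConj_mul_le (hP : P.PosDef) (hQ : Q.PosDef) (y : Fin n → ℝ) :
    (⨅ i, (sqrtInvConjHermitian P Q hP hQ).eigenvalues i) * (y ⬝ᵥ (P *ᵥ y)) ≤
      y ⬝ᵥ (Q *ᵥ y) := by
  set S := hP.posSemidef.sqrt
  have hS : S.IsSymm := isHermitian_iff_isSymm.mp hP.posSemidef.posSemidef_sqrt.isHermitian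
  have hSinv : S⁻¹.IsSymm :=
    isHermitian_iff_isSymm.mp hP.posSemidef.posSemidef_sqrt.isHermitian.inv
  have hP_eq : y ⬝ᵥ (P *ᵥ y) = (S *ᵥ y) ⬝ᵥ (S *ᵥ y) := by
    rw [← hP.posSemidef.sqrt_mul_sqrt, ← mulVec_mulVec, hS.dotProduct_mulVec_comm,
      dotProduct_comm]
  have hQ_eq : y ⬝ᵥ (Q *ᵥ y) = (S *ᵥ y) ⬝ᵥ ((S⁻¹ * Q * S⁻¹) *ᵥ (S *ᵥ y)) := by
    rw [mulVec_mulVec, Matrix.mul_assoc, nonsing_inv_mul _ hP.isUnit_det_sqrt, Matrix.mul_one,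
      ← mulVec_mulVec, hSinv.dotProduct_mulVec_comm, mulVec_mulVec,
      nonsing_inv_mul _ hP.isUnit_det_sqrt, one_mulVec, dotProduct_comm]
  rw [hP_eq, hQ_eq]
  exact (sqrtInvConjHermitian P Q hP hQ).iInf_eigenvalues_mul_dotProduct_self_le _

lemma iInf_eigenvalues_sqrtInvConj_pos [NeZero n] (hP : P.PosDef) (hQ : Q.PosDef) :
    0 < ⨅ i, (sqrtInvConjHermitian P Q hP hQ).eigenvalues i := by
  set S := hP.posSemidef.sqrt
  have hSinv : S⁻¹ᴴ = S⁻¹ := hP.posSemidef.posSemidef_sqrt.isHermitian.inv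
  have hSinv_unit : IsUnit S⁻¹ :=
    isUnit_nonsing_inv_iff.mpr ((isUnit_iff_isUnit_det _).mpr hP.isUnit_det_sqrt)
  have hpos : (S⁻¹ * Q * S⁻¹).PosDef := by
    have h := hQ.conjTranspose_mul_mul_same (mulVec_injective_of_isUnit hSinv_unit)
    rwa [hSinv] at h
  obtain ⟨i, hi⟩ := exists_eq_ciInf_of_finite (f := (sqrtInvConjHermitian P Q hP hQ).eigenvalues)
  exact hi ▸ hpos.eigenvalues_pos i

lemma iInf_eigenvalues_sqrtInvConj_le_one [NeZero n] (hP : P.PosDef) (hQ : Q.PosDef)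
    (hQP : ∀ y, y ⬝ᵥ (Q *ᵥ y) ≤ y ⬝ᵥ (P *ᵥ y)) :
    ⨅ i, (sqrtInvConjHermitian P Q hP hQ).eigenvalues i ≤ 1 := by
  set y : Fin n → ℝ := Pi.single 0 1
  have hy : 0 < y ⬝ᵥ (P *ᵥ y) := by
    simpa using hP.dotProduct_mulVec_pos (x := y) (by simp [y])
  nlinarith [iInf_eigenvalues_sqrtInvConj_mul_le hP hQ y, hQP y]

end SqrtInvConj

lemma le_pow_mul_add_geom_of_le_mul_add {𝕜 : Type*} [Field 𝕜] [LinearOrder 𝕜]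
    [IsStrictOrderedRing 𝕜] {v : ℕ → 𝕜} {ρ δ : 𝕜} (hρ₀ : 0 ≤ ρ) (hρ₁ : ρ ≠ 1)
    (h : ∀ i, v (i + 1) ≤ ρ * v i + δ) (i : ℕ) :
    v i ≤ ρ ^ i * v 0 + δ * (1 - ρ ^ i) / (1 - ρ) := by
  induction i with
  | zero => simp
  | succ i ih =>
    have h1ρ : 1 - ρ ≠ 0 := sub_ne_zero.mpr hρ₁.symm
    calc v (i + 1) ≤ ρ * v i + δ := h i
      _ ≤ ρ * (ρ ^ i * v 0 + δ * (1 - ρ ^ i) / (1 - ρ)) + δ := by gcongr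
      _ = ρ ^ (i + 1) * v 0 + δ * (1 - ρ ^ (i + 1)) / (1 - ρ) := by field_simp; ring

theorem closed_loop_contraction_bounded_perturbation_general (n : ℕ) [NeZero n]
    (A : Matrix (Fin n) (Fin n) ℝ) (B : Fin n → ℝ) (hB : B ≠ 0)
    (P Q : Matrix (Fin n) (Fin n) ℝ) (hP : P.PosDef) (hQ : Q.PosDef)
    (hric : P = Aᵀ * P * A
      - (B ⬝ᵥ (P *ᵥ B))⁻¹ • vecMulVec (Aᵀ *ᵥ (P *ᵥ B)) ((B ᵥ* P) ᵥ* A) + Q)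
    (K : Fin n → ℝ) (hK : K = -((B ⬝ᵥ (P *ᵥ B))⁻¹ • ((B ᵥ* P) ᵥ* A)))
    (δ : ℝ)
    (w : ℕ → ℝ) (hw : ∀ i, (B ⬝ᵥ (P *ᵥ B)) * (w i) ^ 2 ≤ δ)
    (x : ℕ → Fin n → ℝ)
    (hx : ∀ i, x (i + 1) = (A + vecMulVec B K) *ᵥ x i + w i • B) :
    let ρ : ℝ := 1 - ⨅ i, (sqrtInvConjHermitian P Q hP hQ).eigenvalues i
    ∀ i : ℕ,
      x i ⬝ᵥ (P *ᵥ x i) ≤ ρ ^ i * (x 0 ⬝ᵥ (P *ᵥ x 0)) + δ * (1 - ρ ^ i) / (1 - ρ) := by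
  intro ρ
  have hs : B ⬝ᵥ (P *ᵥ B) ≠ 0 := by simpa using (hP.dotProduct_mulVec_pos hB).ne'
  have hmin_pos := iInf_eigenvalues_sqrtInvConj_pos hP hQ
  have hmin_le :=
    iInf_eigenvalues_sqrtInvConj_le_one hP hQ (dotProduct_mulVec_le_of_riccati hP hB hric)
  refine le_pow_mul_add_geom_of_le_mul_add (by linarith) (by linarith) fun i ↦ ?_
  rw [hx i, closedLoop_dotProduct_mulVec_eq (isHermitian_iff_isSymm.mp hP.1) hs hric hK]
  linarith [iInf_eigenvalues_sqrtInvConj_mul_le hP hQ (x i), hw i]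

theorem closed_loop_contraction_bounded_perturbation (n : ℕ) [NeZero n]
    (A : Matrix (Fin n) (Fin n) ℝ) (B : Fin n → ℝ) (hB : B ≠ 0)
    (P Q : Matrix (Fin n) (Fin n) ℝ) (hP : P.PosDef) (hQ : Q.PosDef)
    (hric : P = Aᵀ * P * A
      - (B ⬝ᵥ (P *ᵥ B))⁻¹ • vecMulVec (Aᵀ *ᵥ (P *ᵥ B)) ((B ᵥ* P) ᵥ* A) + Q)
    (K : Fin n → ℝ) (hK : K = -((B ⬝ᵥ (P *ᵥ B))⁻¹ • ((B ᵥ* P) ᵥ* A)))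
    (δ : ℝ) (hδ : 0 ≤ δ)
    (w : ℕ → ℝ) (hw : ∀ i, (B ⬝ᵥ (P *ᵥ B)) * (w i) ^ 2 ≤ δ)
    (x : ℕ → Fin n → ℝ)
    (hx : ∀ i, x (i + 1) = (A + vecMulVec B K) *ᵥ x i + w i • B) :
    let ρ : ℝ := 1 - ⨅ i, (sqrtInvConjHermitian P Q hP hQ).eigenvalues i
    ∀ i : ℕ,
      x i ⬝ᵥ (P *ᵥ x i) ≤ ρ ^ i * (x 0 ⬝ᵥ (P *ᵥ x 0)) + δ * (1 - ρ ^ i) / (1 - ρ) :=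
  closed_loop_contraction_bounded_perturbation_general n A B hB P Q hP hQ hric K hK δ w hw x hx
end
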